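/- arXiv:1612.00439 — 3 statements merged into one kernel-verified Lean document; each statement's English description precedes it below -/
import Mathlib

section
/- Let h : Δ → Δ be a holomorphic map of the open unit disk to itself with h(0) = 0, and set λ = |h'(0)| with λ > 0. Then the open disk of radius r = ((1 - √(1-λ²))/λ)² centered at 0 is contained in the image h(Δ). -/
/-!
Suppose `w ∉ h(Δ)` with `|w| < 1`. Composing `h` with the Blaschke factor
`φ_w(z) = (w - z) / (1 - w̄ z)` gives a zero-free self-map `F` of the disk with `F(0) = w` and
`|F'(0)| = λ (1 - |w|²)`. On the disk `F` has a holomorphic square root `g`, and the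
Schwarz–Pick bound `|g'(0)| ≤ 1 - |g(0)|²` turns into `λ (1 + t²) ≤ 2 t` for `t = √|w|`.
So `t` is at least the smaller root `(1 - √(1 - λ²)) / λ` of `λ t² - 2 t + λ`, i.e. `w` lies
outside the disk of radius `((1 - √(1 - λ²)) / λ)²`.
-/

open Metric Set Complex ComplexConjugate Topology

namespace Complex

noncomputable def blaschkeFactor (a z : ℂ) : ℂ := (a - z) / (1 - conj a * z)

variable {a z : ℂ}

@[simp] lemma blaschkeFactor_zero_right (a : ℂ) : blaschkeFactor a 0 = a := by
  simp [blaschkeFactor]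

@[simp] lemma blaschkeFactor_self (a : ℂ) : blaschkeFactor a a = 0 := by
  simp [blaschkeFactor]

lemma normSq_one_sub_conj_mul_sub_normSq_sub (a z : ℂ) :
    normSq (1 - conj a * z) - normSq (a - z) = (1 - normSq a) * (1 - normSq z) := by
  simp only [normSq_apply, sub_re, sub_im, mul_re, mul_im, one_re, one_im, conj_re, conj_im]
  ring

lemma normSq_sub_lt_normSq_one_sub_conj_mul (ha : ‖a‖ < 1) (hz : ‖z‖ < 1) :
    normSq (a - z) < normSq (1 - conj a * z) := by
  have ha' : normSq a < 1 := by rw [normSq_eq_norm_sq]; nlinarith [norm_nonneg a]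
  have hz' : normSq z < 1 := by rw [normSq_eq_norm_sq]; nlinarith [norm_nonneg z]
  nlinarith [normSq_one_sub_conj_mul_sub_normSq_sub a z]

lemma one_sub_conj_mul_ne_zero (ha : ‖a‖ < 1) (hz : ‖z‖ < 1) : 1 - conj a * z ≠ 0 := by
  intro h
  have := normSq_sub_lt_normSq_one_sub_conj_mul ha hz
  rw [h, map_zero] at this
  exact (normSq_nonneg _).not_gt this

lemma norm_blaschkeFactor_lt_one (ha : ‖a‖ < 1) (hz : ‖z‖ < 1) :
    ‖blaschkeFactor a z‖ < 1 := by
  have hlt := normSq_sub_lt_normSq_one_sub_conj_mul ha hz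
  rw [normSq_eq_norm_sq, normSq_eq_norm_sq] at hlt
  rw [blaschkeFactor, norm_div, div_lt_one (norm_pos_iff.2 (one_sub_conj_mul_ne_zero ha hz))]
  exact lt_of_pow_lt_pow_left₀ 2 (norm_nonneg _) hlt

lemma hasDerivAt_blaschkeFactor (hz : 1 - conj a * z ≠ 0) :
    HasDerivAt (blaschkeFactor a) (-((1 - ‖a‖ ^ 2 : ℝ) : ℂ) / (1 - conj a * z) ^ 2) z := by
  have hnum : HasDerivAt (fun x => a - x) (-1) z := (hasDerivAt_id z).const_sub a
  have hden : HasDerivAt (fun x => 1 - conj a * x) (-conj a) z := by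
    simpa using ((hasDerivAt_id z).const_mul (conj a)).const_sub 1
  refine (hnum.div hden hz).congr_deriv ?_
  push_cast
  rw [← conj_mul']
  ring

lemma blaschkeFactor_eq_zero_iff (hz : 1 - conj a * z ≠ 0) :
    blaschkeFactor a z = 0 ↔ z = a := by
  rw [blaschkeFactor, div_eq_zero_iff, or_iff_left hz, sub_eq_zero, eq_comm]

lemma mapsTo_blaschkeFactor (ha : ‖a‖ < 1) :
    MapsTo (blaschkeFactor a) (ball 0 1) (ball 0 1) := fun z hz => by
  rw [mem_ball_zero_iff] at hz ⊢
  exact norm_blaschkeFactor_lt_one ha hz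

lemma differentiableOn_blaschkeFactor (ha : ‖a‖ < 1) :
    DifferentiableOn ℂ (blaschkeFactor a) (ball 0 1) := fun _ hz =>
  (hasDerivAt_blaschkeFactor (one_sub_conj_mul_ne_zero ha (mem_ball_zero_iff.1 hz)))
    |>.differentiableAt.differentiableWithinAt

theorem norm_deriv_le_one_sub_sq_norm_of_mapsTo_ball {g : ℂ → ℂ}
    (hd : DifferentiableOn ℂ g (ball 0 1)) (hg : MapsTo g (ball 0 1) (ball 0 1)) :
    ‖deriv g 0‖ ≤ 1 - ‖g 0‖ ^ 2 := by
  have h0 : (0 : ℂ) ∈ ball (0 : ℂ) 1 := mem_ball_self one_pos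
  have ha : ‖g 0‖ < 1 := mem_ball_zero_iff.1 (hg h0)
  have hpos : 0 < 1 - ‖g 0‖ ^ 2 := by nlinarith [norm_nonneg (g 0)]
  have hH := (hasDerivAt_blaschkeFactor (one_sub_conj_mul_ne_zero ha ha)).comp 0
    (hd.differentiableAt (isOpen_ball.mem_nhds h0)).hasDerivAt
  have hschwarz := norm_deriv_le_one_of_mapsTo_ball
    ((differentiableOn_blaschkeFactor ha).comp hd hg)
    (by simpa using ((mapsTo_blaschkeFactor ha).comp hg).mono_right ball_subset_closedBall)
    one_pos
  rw [hH.deriv, conj_mul', ← ofReal_pow, ← ofReal_one, ← ofReal_sub, norm_mul, norm_div,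
    norm_neg, norm_pow, norm_real, Real.norm_of_nonneg hpos.le] at hschwarz
  have hsimp : (1 - ‖g 0‖ ^ 2) / (1 - ‖g 0‖ ^ 2) ^ 2 * ‖deriv g 0‖
      = ‖deriv g 0‖ / (1 - ‖g 0‖ ^ 2) := by
    field_simp
  rwa [hsimp, div_le_one hpos] at hschwarz

section

variable {f : ℂ → ℂ} {c : ℂ} {r : ℝ}

theorem exists_exp_eq_of_differentiableOn_ball (hf : DifferentiableOn ℂ f (ball c r))
    (hf0 : ∀ z ∈ ball c r, f z ≠ 0) :
    ∃ L : ℂ → ℂ, DifferentiableOn ℂ L (ball c r) ∧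
      ∀ z ∈ ball c r, exp (L z) = f z := by
  rcases le_or_gt r 0 with hr | hr
  · exact ⟨0, by simp [ball_eq_empty.2 hr]⟩
  have hc : c ∈ ball c r := mem_ball_self hr
  have hf' : DifferentiableOn ℂ (deriv f) (ball c r) :=
    (hf.analyticOnNhd isOpen_ball).deriv.differentiableOn
  obtain ⟨L, hLc, hL⟩ := (hf'.div hf hf0).isExactOn_ball.with_val_at c (log (f c))
  have hN : ∀ z ∈ ball c r, HasDerivAt (fun z => f z * exp (-L z)) 0 z := by
    intro z hz
    refine ((hf.differentiableAt (isOpen_ball.mem_nhds hz)).hasDerivAt.mul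
      (hL z hz).neg.cexp).congr_deriv ?_
    simp only [Pi.div_apply, Pi.neg_apply]
    field_simp [hf0 z hz]
    ring
  refine ⟨L, fun z hz => (hL z hz).differentiableAt.differentiableWithinAt, fun z hz => ?_⟩
  have hconst := isOpen_ball.is_const_of_deriv_eq_zero isPreconnected_ball
    (fun z hz => (hN z hz).differentiableAt.differentiableWithinAt) (fun z hz => (hN z hz).deriv)
    hz hc
  rw [hLc, exp_neg, exp_neg, exp_log (hf0 c hc), mul_inv_cancel₀ (hf0 c hc),
    mul_inv_eq_one₀ (exp_ne_zero _)] at hconst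
  exact hconst.symm

theorem exists_sq_eq_of_differentiableOn_ball (hf : DifferentiableOn ℂ f (ball c r))
    (hf0 : ∀ z ∈ ball c r, f z ≠ 0) :
    ∃ g : ℂ → ℂ, DifferentiableOn ℂ g (ball c r) ∧
      ∀ z ∈ ball c r, g z ^ 2 = f z := by
  obtain ⟨L, hLd, hL⟩ := exists_exp_eq_of_differentiableOn_ball hf hf0
  refine ⟨fun z => exp (L z / 2), (hLd.div_const 2).cexp, fun z hz => ?_⟩
  rw [← exp_nat_mul, ← hL z hz]
  ring_nf

end

theorem norm_deriv_le_of_mapsTo_ball_of_ne_zero {f : ℂ → ℂ}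
    (hd : DifferentiableOn ℂ f (ball 0 1)) (hf : MapsTo f (ball 0 1) (ball 0 1))
    (hf0 : ∀ z ∈ ball 0 1, f z ≠ 0) :
    ‖deriv f 0‖ ≤ 2 * √‖f 0‖ * (1 - ‖f 0‖) := by
  obtain ⟨g, hgd, hg⟩ := exists_sq_eq_of_differentiableOn_ball hd hf0
  have h0 : (0 : ℂ) ∈ ball (0 : ℂ) 1 := mem_ball_self one_pos
  have hg_maps : MapsTo g (ball 0 1) (ball 0 1) := fun z hz => by
    have hfz := mem_ball_zero_iff.1 (hf hz)
    rw [← hg z hz, norm_pow, pow_lt_one_iff_of_nonneg (norm_nonneg _) two_ne_zero] at hfz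
    exact mem_ball_zero_iff.2 hfz
  have hderiv : deriv f 0 = 2 * g 0 * deriv g 0 := by
    have hfg : (fun z => g z ^ 2) =ᶠ[𝓝 0] f :=
      Filter.eventually_of_mem (isOpen_ball.mem_nhds h0) hg
    have hg0 := (hgd.differentiableAt (isOpen_ball.mem_nhds h0)).hasDerivAt
    rw [← hfg.deriv_eq, (hg0.fun_pow 2).deriv]
    ring
  rw [hderiv, ← hg 0 h0, norm_pow, Real.sqrt_sq (norm_nonneg _), norm_mul, norm_mul,
    Complex.norm_two]
  gcongr
  exact norm_deriv_le_one_sub_sq_norm_of_mapsTo_ball hgd hg_maps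

theorem norm_deriv_mul_le_of_notMem_image {h : ℂ → ℂ} {w : ℂ}
    (hmaps : MapsTo h (ball 0 1) (ball 0 1)) (hdiff : DifferentiableOn ℂ h (ball 0 1))
    (h0 : h 0 = 0) (hw1 : ‖w‖ < 1) (hw : w ∉ h '' ball 0 1) :
    ‖deriv h 0‖ * (1 - ‖w‖ ^ 2) ≤ 2 * √‖w‖ * (1 - ‖w‖) := by
  have hbound := norm_deriv_le_of_mapsTo_ball_of_ne_zero
    ((differentiableOn_blaschkeFactor hw1).comp hdiff hmaps)
    ((mapsTo_blaschkeFactor hw1).comp hmaps)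
    fun z hz hFz => hw ⟨z, hz, ((blaschkeFactor_eq_zero_iff
      (one_sub_conj_mul_ne_zero hw1 (mem_ball_zero_iff.1 (hmaps hz)))).1 hFz)⟩
  have hd0 : HasDerivAt h (deriv h 0) 0 :=
    (hdiff.differentiableAt (isOpen_ball.mem_nhds (mem_ball_self one_pos))).hasDerivAt
  rwa [((hasDerivAt_blaschkeFactor (by simp [h0])).comp 0 hd0).deriv, Function.comp_apply, h0,
    blaschkeFactor_zero_right, mul_zero, sub_zero, one_pow, div_one, norm_mul, norm_neg,
    norm_real, Real.norm_of_nonneg (by nlinarith [norm_nonneg w]), mul_comm] at hbound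

end Complex

lemma one_sub_sqrt_one_sub_sq_div_le {lam t : ℝ} (hlam : 0 ≤ lam)
    (ht : lam * (1 + t ^ 2) ≤ 2 * t) : (1 - √(1 - lam ^ 2)) / lam ≤ t := by
  rcases hlam.eq_or_lt with rfl | hlam
  · simp only [div_zero]
    linarith
  have hlam1 : lam ≤ 1 := by nlinarith [sq_nonneg (t - 1)]
  have hs := Real.sq_sqrt (show 0 ≤ 1 - lam ^ 2 by nlinarith)
  rw [div_le_iff₀ hlam]
  nlinarith [Real.sqrt_nonneg (1 - lam ^ 2)]

theorem stmt_0_general (h : ℂ → ℂ) (lam : ℝ)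
    (hmaps : Set.MapsTo h (Metric.ball 0 1) (Metric.ball 0 1))
    (hdiff : DifferentiableOn ℂ h (Metric.ball 0 1))
    (h0 : h 0 = 0) (hlam : ‖deriv h 0‖ = lam) :
    Metric.ball (0 : ℂ) (((1 - Real.sqrt (1 - lam ^ 2)) / lam) ^ 2) ⊆
      h '' Metric.ball 0 1 := by
  intro w hw
  by_contra hw_nmem
  rw [mem_ball_zero_iff] at hw
  have hlam0 : 0 ≤ lam := hlam ▸ norm_nonneg _
  have hlam1 : lam ≤ 1 := hlam ▸ norm_deriv_le_one_of_mapsTo_ball hdiff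
    (by simpa [h0] using hmaps.mono_right ball_subset_closedBall) one_pos
  have hρ0 : 0 ≤ (1 - √(1 - lam ^ 2)) / lam :=
    div_nonneg (sub_nonneg.2 (Real.sqrt_le_one.2 (by linarith [sq_nonneg lam]))) hlam0
  have hρ1 := one_sub_sqrt_one_sub_sq_div_le hlam0 (t := 1) (by linarith)
  have hw1 : ‖w‖ < 1 := by nlinarith
  have hbound := hlam ▸ norm_deriv_mul_le_of_notMem_image hmaps hdiff h0 hw1 hw_nmem
  have ht : √‖w‖ ^ 2 = ‖w‖ := Real.sq_sqrt (norm_nonneg w)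
  set t := √‖w‖
  rw [← ht] at hbound hw hw1
  have hquad : lam * (1 + t ^ 2) ≤ 2 * t :=
    le_of_mul_le_mul_left (by linear_combination hbound) (by linarith : 0 < 1 - t ^ 2)
  nlinarith [one_sub_sqrt_one_sub_sq_div_le hlam0 hquad]

theorem stmt_0 (h : ℂ → ℂ) (lam : ℝ)
    (hmaps : Set.MapsTo h (Metric.ball 0 1) (Metric.ball 0 1))
    (hdiff : DifferentiableOn ℂ h (Metric.ball 0 1))
    (h0 : h 0 = 0) (hlam : ‖deriv h 0‖ = lam) (hpos : 0 < lam) :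
    Metric.ball (0 : ℂ) (((1 - Real.sqrt (1 - lam ^ 2)) / lam) ^ 2) ⊆
      h '' Metric.ball 0 1 :=
  stmt_0_general h lam hmaps hdiff h0 hlam
end

section
/- Let h : Δ → Δ be holomorphic with h(0) = 0, let λ = |h'(0)| > 0, and suppose r > 0 satisfies -r ∉ h(Δ). If g = φ_r ∘ h where φ_r(ζ) = (ζ + r)/(1 + rζ), then |g'(0)| = (1 - r²)λ and g(0) = r, and moreover λr - 2√r + λ ≤ 0 (equivalently (1+r)λ/(2√r) ≤ 1). -/
/-!
Since `h` omits `-r`, `g = φ_r ∘ h` is a holomorphic self-map of the disc omitting `0`, with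
`g 0 = r`. Hence it has a holomorphic square root `q` with `q 0 = √r`, again a self-map of the
disc. The Schwarz lemma applied to `φ_{-√r} ∘ q` gives `‖q' 0‖ ≤ 1 - r`, and `g' = 2 q q'` turns
this into `(1 - r²) λ = ‖g' 0‖ ≤ 2 √r (1 - r)`.
-/

open Metric Set Complex

noncomputable def mobius (a : ℝ) (z : ℂ) : ℂ := (z + a) / (1 + a * z)

section Mobius

variable {a : ℝ} {z : ℂ}

lemma mobius_zero (a : ℝ) : mobius a 0 = a := by
  simp [mobius]

lemma mobius_neg_self (a : ℝ) : mobius (-a) a = 0 := by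
  simp [mobius]

lemma mobius_ne_zero (hz : z ≠ -a) (hden : 1 + a * z ≠ 0) : mobius a z ≠ 0 :=
  div_ne_zero (fun h => hz (by linear_combination h)) hden

lemma normSq_one_add_mul_sub_normSq_add (a : ℝ) (z : ℂ) :
    normSq (1 + a * z) - normSq (z + a) = (1 - a ^ 2) * (1 - normSq z) := by
  simp only [normSq_apply, add_re, add_im, mul_re, mul_im, one_re, one_im, ofReal_re, ofReal_im]
  ring

lemma one_add_mul_ne_zero (ha : |a| < 1) (hz : ‖z‖ < 1) : 1 + a * z ≠ 0 := by
  intro h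
  have h1 : ‖(a : ℂ) * z‖ = 1 := by simp [eq_neg_of_add_eq_zero_right h]
  rw [norm_mul, norm_real, Real.norm_eq_abs] at h1
  nlinarith [abs_nonneg a, norm_nonneg z]

lemma norm_mobius_lt_one (ha : |a| < 1) (hz : ‖z‖ < 1) : ‖mobius a z‖ < 1 := by
  have hden := one_add_mul_ne_zero ha hz
  rw [mobius, norm_div, div_lt_one (norm_pos_iff.2 hden),
    ← sq_lt_sq₀ (norm_nonneg _) (norm_nonneg _), ← normSq_eq_norm_sq, ← normSq_eq_norm_sq]
  have ha2 : a ^ 2 < 1 := (sq_lt_one_iff_abs_lt_one a).2 ha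
  have hz2 : normSq z < 1 := by rw [normSq_eq_norm_sq]; nlinarith [norm_nonneg z]
  nlinarith [normSq_one_add_mul_sub_normSq_add a z, mul_pos (sub_pos.2 ha2) (sub_pos.2 hz2)]

lemma mapsTo_mobius (ha : |a| < 1) : MapsTo (mobius a) (ball 0 1) (ball 0 1) := fun z hz => by
  rw [mem_ball_zero_iff] at hz ⊢
  exact norm_mobius_lt_one ha hz

lemma hasDerivAt_mobius (hz : 1 + a * z ≠ 0) :
    HasDerivAt (mobius a) ((1 - a ^ 2) / (1 + a * z) ^ 2) z := by
  refine (((hasDerivAt_id' z).add_const (a : ℂ)).div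
    (((hasDerivAt_id' z).const_mul (a : ℂ)).const_add 1) hz).congr_deriv ?_
  ring

lemma differentiableOn_mobius (ha : |a| < 1) : DifferentiableOn ℂ (mobius a) (ball 0 1) :=
  fun _ hz => (hasDerivAt_mobius (one_add_mul_ne_zero ha (mem_ball_zero_iff.1 hz)))
    |>.differentiableAt.differentiableWithinAt

end Mobius

theorem norm_deriv_le_one_sub_sq_of_mapsTo_ball {f : ℂ → ℂ} {a : ℝ}
    (hf : DifferentiableOn ℂ f (ball 0 1)) (hmaps : MapsTo f (ball 0 1) (ball 0 1))
    (hf0 : f 0 = a) : ‖deriv f 0‖ ≤ 1 - a ^ 2 := by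
  have ha : |a| < 1 := by
    simpa [hf0] using hmaps (mem_ball_self one_pos)
  have ha' : |-a| < 1 := by rwa [abs_neg]
  have ha2 : 0 < 1 - a ^ 2 := sub_pos.2 ((sq_lt_one_iff_abs_lt_one a).2 ha)
  set ψ := mobius (-a) ∘ f
  have hψ0 : ψ 0 = 0 := by simp only [ψ, Function.comp_apply, hf0, mobius_neg_self]
  have hψ : DifferentiableOn ℂ ψ (ball 0 1) := (differentiableOn_mobius ha').comp hf hmaps
  have hψmaps : MapsTo ψ (ball 0 1) (closedBall (ψ 0) 1) := by
    rw [hψ0]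
    exact ((mapsTo_mobius ha').comp hmaps).mono_right ball_subset_closedBall
  have hderiv : deriv ψ 0 = deriv f 0 / ((1 - a ^ 2 : ℝ) : ℂ) := by
    have hfd := (hf.differentiableAt (ball_mem_nhds 0 one_pos)).hasDerivAt
    have hden : 1 + ((-a : ℝ) : ℂ) * f 0 = ((1 - a ^ 2 : ℝ) : ℂ) := by
      rw [hf0]; push_cast; ring
    have hden0 : ((1 - a ^ 2 : ℝ) : ℂ) ≠ 0 := by exact_mod_cast ha2.ne'
    rw [((hasDerivAt_mobius (hden ▸ hden0)).comp 0 hfd).deriv, hden,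
      show (1 : ℂ) - ((-a : ℝ) : ℂ) ^ 2 = ((1 - a ^ 2 : ℝ) : ℂ) by push_cast; ring]
    field_simp
  have hSchwarz := Complex.norm_deriv_le_one_of_mapsTo_ball hψ hψmaps one_pos
  rwa [hderiv, norm_div, norm_real, Real.norm_of_nonneg ha2.le, div_le_one ha2] at hSchwarz

theorem exists_differentiableOn_exp_eq {f : ℂ → ℂ} {c : ℂ} {R : ℝ}
    (hf : DifferentiableOn ℂ f (ball c R)) (hne : ∀ z ∈ ball c R, f z ≠ 0) :
    ∃ L : ℂ → ℂ, DifferentiableOn ℂ L (ball c R) ∧ ∀ z ∈ ball c R, exp (L z) = f z := by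
  obtain ⟨F, hF⟩ := ((hf.deriv isOpen_ball).div hf hne).isExactOn_ball
  have hFd : DifferentiableOn ℂ F (ball c R) := fun z hz =>
    (hF z hz).differentiableAt.differentiableWithinAt
  have hexpF : DifferentiableOn ℂ (exp ∘ F) (ball c R) := hFd.cexp
  have hlog : EqOn (logDeriv f) (logDeriv (exp ∘ F)) (ball c R) := fun z hz => by
    rw [logDeriv_comp differentiableAt_exp (hF z hz).differentiableAt, logDeriv_exp,
      (hF z hz).deriv, logDeriv_apply, Pi.one_apply, one_mul, Pi.div_apply]
  obtain ⟨K, hK0, hK⟩ := (logDeriv_eqOn_iff hf hexpF isOpen_ball (convex_ball c R).isPreconnected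
    (fun z _ => exp_ne_zero _) hne).1 hlog
  refine ⟨fun z => F z + log K, hFd.add_const _, fun z hz => ?_⟩
  rw [hK hz, exp_add, exp_log hK0, Pi.smul_apply, smul_eq_mul, Function.comp_apply, mul_comm]

theorem exists_differentiableOn_sq_eq {f : ℂ → ℂ} {c w : ℂ} {R : ℝ} (hR : 0 < R)
    (hf : DifferentiableOn ℂ f (ball c R)) (hne : ∀ z ∈ ball c R, f z ≠ 0) (hw : w ^ 2 = f c) :
    ∃ q : ℂ → ℂ, DifferentiableOn ℂ q (ball c R) ∧ q c = w ∧ ∀ z ∈ ball c R, q z ^ 2 = f z := by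
  obtain ⟨L, hL, hexp⟩ := exists_differentiableOn_exp_eq hf hne
  have hsq : ∀ z ∈ ball c R, exp (L z / 2) ^ 2 = f z := fun z hz => by
    rw [← exp_nat_mul, ← hexp z hz]
    ring_nf
  have hq : DifferentiableOn ℂ (fun z => exp (L z / 2)) (ball c R) := (hL.div_const 2).cexp
  rcases sq_eq_sq_iff_eq_or_eq_neg.1 ((hsq c (mem_ball_self hR)).trans hw.symm) with h | h
  · exact ⟨_, hq, h, hsq⟩
  · exact ⟨fun z => -exp (L z / 2), hq.neg, by simp [h], fun z hz => by rw [neg_sq, hsq z hz]⟩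

theorem norm_deriv_le_of_mapsTo_ball_of_ne_zero {g : ℂ → ℂ} {r : ℝ} (hr : 0 ≤ r)
    (hg : DifferentiableOn ℂ g (ball 0 1)) (hmaps : MapsTo g (ball 0 1) (ball 0 1))
    (hne : ∀ z ∈ ball 0 1, g z ≠ 0) (hg0 : g 0 = r) :
    ‖deriv g 0‖ ≤ 2 * √r * (1 - r) := by
  obtain ⟨q, hq, hq0, hsq⟩ := exists_differentiableOn_sq_eq one_pos hg hne
    (w := (√r : ℂ)) (by rw [hg0, ← ofReal_pow, Real.sq_sqrt hr])
  have hqmaps : MapsTo q (ball 0 1) (ball 0 1) := fun z hz => by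
    have := hmaps hz
    rw [mem_ball_zero_iff, ← hsq z hz, norm_pow] at this
    rw [mem_ball_zero_iff]
    exact (pow_lt_one_iff_of_nonneg (norm_nonneg _) two_ne_zero).1 this
  have hq' : ‖deriv q 0‖ ≤ 1 - r := by
    simpa [Real.sq_sqrt hr] using norm_deriv_le_one_sub_sq_of_mapsTo_ball hq hqmaps hq0
  have hderiv : deriv g 0 = 2 * √r * deriv q 0 := by
    have hqd := (hq.differentiableAt (ball_mem_nhds 0 one_pos)).hasDerivAt.pow 2
    have hgq : q ^ 2 =ᶠ[nhds 0] g :=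
      Filter.eventually_of_mem (ball_mem_nhds 0 one_pos) hsq
    rw [← hgq.deriv_eq, hqd.deriv, hq0]
    ring
  rw [hderiv, norm_mul, norm_mul, Complex.norm_two, norm_real,
    Real.norm_of_nonneg (Real.sqrt_nonneg r)]
  gcongr

theorem stmt_1_general (h : ℂ → ℂ) (lam r : ℝ)
    (hmaps : Set.MapsTo h (Metric.ball 0 1) (Metric.ball 0 1))
    (hdiff : DifferentiableOn ℂ h (Metric.ball 0 1))
    (h0 : h 0 = 0) (hlam : ‖deriv h 0‖ = lam)
    (hr0 : 0 < r) (hr1 : r < 1)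
    (hnot : ∀ z ∈ Metric.ball (0 : ℂ) 1, h z ≠ -(r : ℂ)) :
    ‖deriv (fun ζ : ℂ => (h ζ + (r : ℂ)) / (1 + (r : ℂ) * h ζ)) 0‖
        = (1 - r ^ 2) * lam ∧
    (h 0 + (r : ℂ)) / (1 + (r : ℂ) * h 0) = (r : ℂ) ∧
    lam * r - 2 * Real.sqrt r + lam ≤ 0 := by
  have hr : |r| < 1 := abs_lt.2 ⟨by linarith, hr1⟩
  change ‖deriv (mobius r ∘ h) 0‖ = _ ∧ mobius r (h 0) = r ∧ _
  have hg0 : mobius r (h 0) = r := by rw [h0, mobius_zero]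
  have hderiv : deriv (mobius r ∘ h) 0 = ((1 - r ^ 2 : ℝ) : ℂ) * deriv h 0 := by
    have hhd := (hdiff.differentiableAt (ball_mem_nhds 0 one_pos)).hasDerivAt
    have hden : 1 + (r : ℂ) * h 0 ≠ 0 := by simp [h0]
    rw [((hasDerivAt_mobius hden).comp 0 hhd).deriv, h0]
    push_cast
    ring
  have hnorm : ‖deriv (mobius r ∘ h) 0‖ = (1 - r ^ 2) * lam := by
    rw [hderiv, norm_mul, norm_real, Real.norm_of_nonneg (by nlinarith), hlam]
  have hbound := norm_deriv_le_of_mapsTo_ball_of_ne_zero hr0.le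
    ((differentiableOn_mobius hr).comp hdiff hmaps) ((mapsTo_mobius hr).comp hmaps)
    (fun z hz => mobius_ne_zero (hnot z hz)
      (one_add_mul_ne_zero hr (mem_ball_zero_iff.1 (hmaps hz)))) hg0
  refine ⟨hnorm, hg0, ?_⟩
  rw [hnorm] at hbound
  have hfactor : (1 - r) * ((1 + r) * lam) ≤ (1 - r) * (2 * √r) := by linarith
  have := le_of_mul_le_mul_left hfactor (sub_pos.2 hr1)
  linarith

theorem stmt_1 (h : ℂ → ℂ) (lam r : ℝ)
    (hmaps : Set.MapsTo h (Metric.ball 0 1) (Metric.ball 0 1))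
    (hdiff : DifferentiableOn ℂ h (Metric.ball 0 1))
    (h0 : h 0 = 0) (hlam : ‖deriv h 0‖ = lam) (hpos : 0 < lam)
    (hr0 : 0 < r) (hr1 : r < 1)
    (hnot : ∀ z ∈ Metric.ball (0 : ℂ) 1, h z ≠ -(r : ℂ)) :
    ‖deriv (fun ζ : ℂ => (h ζ + (r : ℂ)) / (1 + (r : ℂ) * h ζ)) 0‖
        = (1 - r ^ 2) * lam ∧
    (h 0 + (r : ℂ)) / (1 + (r : ℂ) * h 0) = (r : ℂ) ∧
    lam * r - 2 * Real.sqrt r + lam ≤ 0 :=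
  stmt_1_general h lam r hmaps hdiff h0 hlam hr0 hr1 hnot
end

section
/- Let Γ ⊂ Aut(Δ) act freely and suppose the universal covering map is injective on the horoball D_{1/N}(1-1/N) (i.e., Γ does not identify distinct points of D_{1/N}(1-1/N)). Then for every z ∈ D_{1/n}(1-1/n) with n > N and every γ ∈ Γ \ {id}, the Möbius distance satisfies d_M(z, γ(z)) ≥ M(N,n) := (n(2-1/n)/(N(2-1/N)) - 1) / (n(2-1/n)/(N(2-1/N)) + 1). -/
/-!
Horoballs at `1` are the superlevel sets `{P > k - 1}` of the Poisson kernel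
`P z = (1 - |z|²) / |1 - z|²`, and `P` satisfies the Harnack inequality
`P z * (1 - d) ≤ P w * (1 + d)` with `d = dM z w`. A point `z` of the small horoball lies in the big
one, so `γ z` lies outside it; comparing `P z > n - 1` with `P (γ z) ≤ N - 1` gives
`dM z (γ z) ≥ (n - N) / (n + N - 2)`, which dominates `M(N, n) = (n - N) / (n + N - 1)`.
-/

open Metric Set

/-- The Möbius (pseudo-hyperbolic) distance on the unit disk. -/
noncomputable def dM (a b : ℂ) : ℝ := ‖(a - b) / (1 - (starRingEnd ℂ) b * a)‖

open Complex ComplexConjugate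

noncomputable def poissonKernelAtOne (z : ℂ) : ℝ := (1 - normSq z) / normSq (1 - z)

lemma mem_ball_zero_one_iff_normSq_lt_one (z : ℂ) : z ∈ ball (0 : ℂ) 1 ↔ normSq z < 1 := by
  rw [mem_ball_zero_iff, normSq_eq_norm_sq, sq_lt_one_iff₀ (norm_nonneg z)]

lemma normSq_one_sub_pos {z : ℂ} (hz : normSq z < 1) : 0 < normSq (1 - z) := by
  refine normSq_pos.mpr (sub_ne_zero.mpr fun h => ?_)
  simp [← h] at hz

lemma mem_horoball_iff {k : ℝ} (hk : 0 < k) (z : ℂ) :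
    z ∈ ball ((1 - 1 / k : ℝ) : ℂ) (1 / k) ↔ (k - 1) * normSq (1 - z) < 1 - normSq z := by
  rw [mem_ball, dist_eq, ← pow_lt_pow_iff_left₀ (norm_nonneg _) (by positivity) two_ne_zero,
    Complex.sq_norm, div_pow, one_pow, lt_div_iff₀ (by positivity), ← sub_pos,
    ← sub_pos (a := 1 - normSq z)]
  have key : 1 - normSq (z - ((1 - 1 / k : ℝ) : ℂ)) * k ^ 2
      = k * (1 - normSq z - (k - 1) * normSq (1 - z)) := by
    simp only [normSq_apply, sub_re, sub_im, one_re, one_im, ofReal_re, ofReal_im]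
    field_simp
    ring
  rw [key, mul_pos_iff_of_pos_left hk]

lemma horoball_subset_horoball {k l : ℝ} (hl : 0 < l) (hlk : l ≤ k) :
    ball ((1 - 1 / k : ℝ) : ℂ) (1 / k) ⊆ ball ((1 - 1 / l : ℝ) : ℂ) (1 / l) := by
  intro z hz
  rw [mem_horoball_iff (hl.trans_le hlk)] at hz
  rw [mem_horoball_iff hl]
  nlinarith [normSq_nonneg (1 - z)]

lemma normSq_lt_one_of_mem_horoball {k : ℝ} (hk : 1 ≤ k) {z : ℂ}
    (hz : z ∈ ball ((1 - 1 / k : ℝ) : ℂ) (1 / k)) : normSq z < 1 := by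
  rw [mem_horoball_iff (by linarith)] at hz
  nlinarith [normSq_nonneg (1 - z)]

lemma mem_horoball_iff_lt_poissonKernelAtOne {k : ℝ} (hk : 0 < k) {z : ℂ} (hz : normSq z < 1) :
    z ∈ ball ((1 - 1 / k : ℝ) : ℂ) (1 / k) ↔ k - 1 < poissonKernelAtOne z := by
  rw [mem_horoball_iff hk, poissonKernelAtOne, lt_div_iff₀ (normSq_one_sub_pos hz)]

lemma sq_norm_one_sub_conj_mul_sub_sq_norm_sub (z w : ℂ) :
    ‖1 - conj w * z‖ ^ 2 - ‖z - w‖ ^ 2 = (1 - normSq z) * (1 - normSq w) := by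
  simp only [Complex.sq_norm, normSq_apply, mul_re, mul_im, sub_re, sub_im, one_re, one_im,
    conj_re, conj_im]
  ring

lemma dM_le_one {z w : ℂ} (hz : normSq z ≤ 1) (hw : normSq w ≤ 1) : dM z w ≤ 1 := by
  have hid := sq_norm_one_sub_conj_mul_sub_sq_norm_sub z w
  have hsq : ‖z - w‖ ^ 2 ≤ ‖1 - conj w * z‖ ^ 2 := by
    nlinarith [mul_nonneg (sub_nonneg.2 hz) (sub_nonneg.2 hw)]
  rw [dM, norm_div]
  exact div_le_one_of_le₀ (le_of_sq_le_sq hsq (norm_nonneg _)) (norm_nonneg _)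

lemma mul_sub_le_mul_add_of_add_sq_mul_le {X Y A B : ℝ} (hX : 0 ≤ X) (hY : 0 ≤ Y) (hB : 0 ≤ B)
    (h : (X + Y) ^ 2 * (A ^ 2 - B ^ 2) ≤ 4 * A ^ 2 * (X * Y)) :
    X * (A - B) ≤ Y * (A + B) := by
  have hsq : (A * (X - Y)) ^ 2 ≤ (B * (X + Y)) ^ 2 := by linear_combination h
  linarith [le_of_sq_le_sq hsq (by positivity)]

lemma poissonKernelAtOne_mul_one_sub_dM_le {z w : ℂ} (hz : normSq z < 1) (hw : normSq w < 1) :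
    poissonKernelAtOne z * (1 - dM z w) ≤ poissonKernelAtOne w * (1 + dM z w) := by
  set A := ‖1 - conj w * z‖
  set B := ‖z - w‖
  set E := (1 - conj w * z) * conj (1 - z) * (1 - w)
  have hpz : 0 < 1 - normSq z := sub_pos.2 hz
  have hpw : 0 < 1 - normSq w := sub_pos.2 hw
  have hqz := normSq_one_sub_pos hz
  have hqw := normSq_one_sub_pos hw
  have hAB : A ^ 2 - B ^ 2 = (1 - normSq z) * (1 - normSq w) :=
    sq_norm_one_sub_conj_mul_sub_sq_norm_sub z w
  have hA : 0 < A := by nlinarith [mul_pos hpz hpw, norm_nonneg (1 - conj w * z)]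
  -- The cross sum is twice the real part of `E`, whose modulus is `A * |1 - z| * |1 - w|`.
  have hsum : (1 - normSq z) * normSq (1 - w) + (1 - normSq w) * normSq (1 - z) = 2 * E.re := by
    simp only [E, normSq_apply, mul_re, mul_im, sub_re, sub_im, one_re, one_im, conj_re, conj_im]
    ring
  have hnormSq : normSq E = A ^ 2 * (normSq (1 - z) * normSq (1 - w)) := by
    simp only [E, A, normSq_mul, normSq_conj, Complex.sq_norm]
    ring
  have key := mul_sub_le_mul_add_of_add_sq_mul_le (mul_nonneg hpz.le hqw.le)
    (mul_nonneg hpw.le hqz.le) (norm_nonneg (z - w))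
    (by rw [hsum, hAB]; nlinarith [re_sq_le_normSq E, mul_pos hpz hpw])
  have hdM : dM z w = B / A := by rw [dM, norm_div]
  rw [poissonKernelAtOne, poissonKernelAtOne, hdM, one_sub_div hA.ne', one_add_div hA.ne',
    div_mul_div_comm, div_mul_div_comm, div_le_div_iff₀ (by positivity) (by positivity)]
  nlinarith [mul_le_mul_of_nonneg_right key hA.le]

lemma sub_le_mul_dM_of_mem_horoball {k l : ℝ} (hk : 1 ≤ k) (hl : 0 < l) {z w : ℂ}
    (hz : z ∈ ball ((1 - 1 / k : ℝ) : ℂ) (1 / k)) (hw : w ∉ ball ((1 - 1 / l : ℝ) : ℂ) (1 / l))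
    (hw₁ : normSq w < 1) : k - l ≤ (k + l - 2) * dM z w := by
  have hz₁ := normSq_lt_one_of_mem_horoball hk hz
  rw [mem_horoball_iff_lt_poissonKernelAtOne (by linarith) hz₁] at hz
  rw [mem_horoball_iff_lt_poissonKernelAtOne hl hw₁, not_lt] at hw
  have hd₀ : 0 ≤ dM z w := norm_nonneg _
  have hd₁ : dM z w ≤ 1 := dM_le_one hz₁.le hw₁.le
  have : (k - 1) * (1 - dM z w) ≤ (l - 1) * (1 + dM z w) :=
    calc (k - 1) * (1 - dM z w) ≤ poissonKernelAtOne z * (1 - dM z w) := by gcongr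
      _ ≤ poissonKernelAtOne w * (1 + dM z w) := poissonKernelAtOne_mul_one_sub_dM_le hz₁ hw₁
      _ ≤ (l - 1) * (1 + dM z w) := by gcongr
  linarith

theorem stmt_16_general (S : Set (ℂ → ℂ)) (N n : ℕ) (hN : 0 < N) (hn : N < n)
    (hSmap : ∀ γ ∈ S, Set.MapsTo γ (Metric.ball (0 : ℂ) 1) (Metric.ball (0 : ℂ) 1))
    (hnoid : ∀ γ ∈ S, γ ≠ id →
      ∀ u ∈ Metric.ball (((1 - 1 / (N : ℝ) : ℝ)) : ℂ) (1 / (N : ℝ)),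
      ∀ v ∈ Metric.ball (((1 - 1 / (N : ℝ) : ℝ)) : ℂ) (1 / (N : ℝ)), γ u ≠ v) :
    ∀ z ∈ Metric.ball (((1 - 1 / (n : ℝ) : ℝ)) : ℂ) (1 / (n : ℝ)), ∀ γ ∈ S, γ ≠ id →
      (((n : ℝ) * (2 - 1 / (n : ℝ))) / ((N : ℝ) * (2 - 1 / (N : ℝ))) - 1) /
          (((n : ℝ) * (2 - 1 / (n : ℝ))) / ((N : ℝ) * (2 - 1 / (N : ℝ))) + 1) ≤
        dM z (γ z) := by
  intro z hz γ hγ hγid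
  have hN₁ : (1 : ℝ) ≤ N := by exact_mod_cast hN
  have hnN : (N : ℝ) + 1 ≤ n := by exact_mod_cast hn
  have hz₁ := normSq_lt_one_of_mem_horoball (by linarith) hz
  have hzN := horoball_subset_horoball (l := N) (by linarith) (by linarith) hz
  have hγz : γ z ∉ ball ((1 - 1 / (N : ℝ) : ℝ) : ℂ) (1 / (N : ℝ)) :=
    fun h => hnoid γ hγ hγid z hzN (γ z) h rfl
  have hγz₁ : normSq (γ z) < 1 := (mem_ball_zero_one_iff_normSq_lt_one _).1
    (hSmap γ hγ ((mem_ball_zero_one_iff_normSq_lt_one z).2 hz₁))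
  have hdist := sub_le_mul_dM_of_mem_horoball (by linarith) (by linarith) hz hγz hγz₁
  have hM : (((n : ℝ) * (2 - 1 / (n : ℝ))) / ((N : ℝ) * (2 - 1 / (N : ℝ))) - 1) /
      (((n : ℝ) * (2 - 1 / (n : ℝ))) / ((N : ℝ) * (2 - 1 / (N : ℝ))) + 1)
      = (n - N) / (n + N - 1) := by
    have h2n : (n : ℝ) * (2 - 1 / n) = 2 * n - 1 := by
      rw [mul_sub, mul_one_div_cancel (by linarith)]; ring
    have h2N : (N : ℝ) * (2 - 1 / N) = 2 * N - 1 := by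
      rw [mul_sub, mul_one_div_cancel (by linarith)]; ring
    rw [h2n, h2N, div_sub_one (by linarith), div_add_one (by linarith),
      div_div_div_cancel_right₀ (by linarith), div_eq_div_iff (by linarith) (by linarith)]
    ring
  rw [hM, div_le_iff₀ (by linarith)]
  nlinarith [(norm_nonneg _ : 0 ≤ dM z (γ z))]

theorem stmt_16 (S : Set (ℂ → ℂ)) (N n : ℕ) (hN : 0 < N) (hn : N < n)
    (hSmap : ∀ γ ∈ S, Set.MapsTo γ (Metric.ball (0 : ℂ) 1) (Metric.ball (0 : ℂ) 1))
    (hSiso : ∀ γ ∈ S, ∀ a ∈ Metric.ball (0 : ℂ) 1, ∀ b ∈ Metric.ball (0 : ℂ) 1,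
      dM (γ a) (γ b) = dM a b)
    (hnoid : ∀ γ ∈ S, γ ≠ id →
      ∀ u ∈ Metric.ball (((1 - 1 / (N : ℝ) : ℝ)) : ℂ) (1 / (N : ℝ)),
      ∀ v ∈ Metric.ball (((1 - 1 / (N : ℝ) : ℝ)) : ℂ) (1 / (N : ℝ)), γ u ≠ v) :
    ∀ z ∈ Metric.ball (((1 - 1 / (n : ℝ) : ℝ)) : ℂ) (1 / (n : ℝ)), ∀ γ ∈ S, γ ≠ id →
      (((n : ℝ) * (2 - 1 / (n : ℝ))) / ((N : ℝ) * (2 - 1 / (N : ℝ))) - 1) /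
          (((n : ℝ) * (2 - 1 / (n : ℝ))) / ((N : ℝ) * (2 - 1 / (N : ℝ))) + 1) ≤
        dM z (γ z) :=
  stmt_16_general S N n hN hn hSmap hnoid
end
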